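/- arXiv:1503.04995 — 2 statements merged into one kernel-verified Lean document; each statement's English description precedes it below -/
import Mathlib

section
/- Let q₋, q₊ ∈ S² with q₋ ≠ q₊, and define w : ℝ → ℝ³ by w(t) = |tanh t| · q₋ for t ≤ 0 and w(t) = |tanh t| · q₊ for t > 0. Then: (a) w is differentiable at every t ≠ 0 and ∫_ℝ [(‖w(t)‖² − 1)² + ‖w'(t)‖²] dt = 8/3 (the derivative taken at every t ≠ 0, which is almost every t); (b) there exists a map u : ℝ → ℝ³, differentiable at every point, with ‖u(t)‖ = 1 for all t and u(t) ∈ (S² ∩ q₋^⊥) ∪ (S² ∩ q₊^⊥) for all t, such that u(t) × u'(t) = w(t) for every t ∈ ℝ. -/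
open MeasureTheory Filter
open scoped RealInnerProductSpace

/-- The cross product on Euclidean `ℝ³`. -/
noncomputable def cross3 (a b : EuclideanSpace ℝ (Fin 3)) : EuclideanSpace ℝ (Fin 3) :=
  (WithLp.equiv 2 (Fin 3 → ℝ)).symm
    (crossProduct ((WithLp.equiv 2 (Fin 3 → ℝ)) a) ((WithLp.equiv 2 (Fin 3 → ℝ)) b))

/-! Away from `t = 0` the energy density of the wall is `2 (1 - tanh² t)²`, and the substitution
`y = tanh t` turns its integral into `∫₋₁¹ 2 (1 - y²) dy = 8/3`.

For the spin field pick a unit vector `e` orthogonal to both `q₋` and `q₊`. For a unit `q ⊥ e` the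
curve `u = cos θ • e + sin θ • (q × e)` stays on the great circle `S² ∩ q^⊥` and satisfies
`u × u' = θ' q`. The angle `θ = ∓ log cosh t` on the two half-lines has `θ' = |tanh t|`, and both
halves leave `e` with zero velocity at `t = 0`, so they glue to a differentiable field. -/

local notation "ℝ³" => EuclideanSpace ℝ (Fin 3)

lemma cross3_apply (a b : ℝ³) (i : Fin 3) :
    cross3 a b i = (crossProduct (WithLp.ofLp a) (WithLp.ofLp b)) i := rfl

lemma cross3_smul_add_smul (x y : ℝ³) (a b c d : ℝ) :
    cross3 (a • x + b • y) (c • x + d • y) = (a * d - b * c) • cross3 x y := by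
  ext i; fin_cases i <;> simp [cross3_apply, cross_apply] <;> ring

lemma cross3_cross3 (a b c : ℝ³) : cross3 a (cross3 b c) = ⟪a, c⟫ • b - ⟪a, b⟫ • c := by
  ext i
  fin_cases i <;> simp [cross3_apply, cross_apply, PiLp.inner_apply, Fin.sum_univ_three] <;> ring

lemma inner_cross3_cross3 (a b c d : ℝ³) :
    ⟪cross3 a b, cross3 c d⟫ = ⟪a, c⟫ * ⟪b, d⟫ - ⟪a, d⟫ * ⟪b, c⟫ := by
  simp [cross3_apply, cross_apply, PiLp.inner_apply, Fin.sum_univ_three]; ring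

lemma inner_cross3_left (a b : ℝ³) : ⟪cross3 a b, a⟫ = 0 := by
  simp [cross3_apply, cross_apply, PiLp.inner_apply, Fin.sum_univ_three]; ring

lemma inner_cross3_right (a b : ℝ³) : ⟪cross3 a b, b⟫ = 0 := by
  simp [cross3_apply, cross_apply, PiLp.inner_apply, Fin.sum_univ_three]; ring

namespace Real

lemma hasDerivAt_tanh (x : ℝ) : HasDerivAt tanh (1 - tanh x ^ 2) x := by
  have hc := (cosh_pos x).ne'
  have h := (hasDerivAt_sinh x).div (hasDerivAt_cosh x) hc
  have hfun : sinh / cosh = tanh := funext fun y => (tanh_eq_sinh_div_cosh y).symm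
  rw [hfun] at h
  refine h.congr_deriv ?_
  rw [tanh_eq_sinh_div_cosh]; field_simp

lemma strictMono_tanh : StrictMono tanh :=
  strictMono_of_hasDerivAt_pos hasDerivAt_tanh fun x => by linarith [tanh_sq_lt_one x]

lemma tanh_nonneg {x : ℝ} (hx : 0 ≤ x) : 0 ≤ tanh x :=
  tanh_zero ▸ strictMono_tanh.monotone hx

lemma tanh_nonpos {x : ℝ} (hx : x ≤ 0) : tanh x ≤ 0 :=
  tanh_zero ▸ strictMono_tanh.monotone hx

lemma range_tanh : Set.range tanh = Set.Ioo (-1) 1 := by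
  rw [← Set.image_univ]; exact tanh_bijOn.image_eq

lemma hasDerivAt_log_cosh (x : ℝ) : HasDerivAt (fun x => log (cosh x)) (tanh x) x := by
  simpa [tanh_eq_sinh_div_cosh] using (hasDerivAt_cosh x).log (cosh_pos x).ne'

lemma lintegral_two_mul_one_sub_tanh_sq_sq :
    ∫⁻ x, ENNReal.ofReal (2 * (1 - tanh x ^ 2) ^ 2) = ENNReal.ofReal (8 / 3) := by
  have hsubst := lintegral_image_eq_lintegral_deriv_mul_of_monotoneOn MeasurableSet.univ
    (fun x _ => (hasDerivAt_tanh x).hasDerivWithinAt) (strictMono_tanh.monotone.monotoneOn _)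
    (fun y => ENNReal.ofReal (2 * (1 - y ^ 2)))
  rw [Set.image_univ, range_tanh, Measure.restrict_univ] at hsubst
  have hnonneg : ∀ᵐ y ∂volume.restrict (Set.Ioo (-1 : ℝ) 1), 0 ≤ 2 * (1 - y ^ 2) :=
    (ae_restrict_iff' measurableSet_Ioo).2 <| Eventually.of_forall fun y hy => by
      nlinarith [hy.1, hy.2]
  calc ∫⁻ x, ENNReal.ofReal (2 * (1 - tanh x ^ 2) ^ 2)
      = ∫⁻ x, ENNReal.ofReal (1 - tanh x ^ 2) * ENNReal.ofReal (2 * (1 - tanh x ^ 2)) := by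
        refine lintegral_congr fun x => ?_
        rw [← ENNReal.ofReal_mul (by linarith [tanh_sq_lt_one x])]; ring_nf
    _ = ∫⁻ y in Set.Ioo (-1) 1, ENNReal.ofReal (2 * (1 - y ^ 2)) := hsubst.symm
    _ = ENNReal.ofReal (∫ y in (-1)..1, 2 * (1 - y ^ 2)) := by
        rw [intervalIntegral.integral_of_le (by norm_num), integral_Ioc_eq_integral_Ioo,
          ofReal_integral_eq_lintegral_ofReal _ hnonneg]
        exact (Continuous.integrableOn_Icc (by fun_prop)).mono_set Set.Ioo_subset_Icc_self
    _ = ENNReal.ofReal (8 / 3) := by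
        norm_num [integral_pow, intervalIntegral.integral_sub, intervalIntegral.integral_const_mul]

end Real

section Gluing

variable {E : Type*} [NormedAddCommGroup E] [NormedSpace ℝ E]

lemma hasDerivAt_ite_le {f g f' g' : ℝ → E} {a : ℝ} (hf : ∀ t, HasDerivAt f (f' t) t)
    (hg : ∀ t, HasDerivAt g (g' t) t) (hfg : f a = g a) (hfg' : f' a = g' a) (t : ℝ) :
    HasDerivAt (fun s => if s ≤ a then f s else g s) (if t ≤ a then f' t else g' t) t := by
  rcases lt_trichotomy t a with h | rfl | h
  · rw [if_pos h.le]
    refine (hf t).congr_of_eventuallyEq ?_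
    filter_upwards [Iio_mem_nhds h] with s hs using if_pos (le_of_lt hs)
  · rw [if_pos le_rfl]
    have hleft : HasDerivWithinAt (fun s => if s ≤ t then f s else g s) (f' t) (Set.Iic t) t :=
      (hf t).hasDerivWithinAt.congr (fun s hs => if_pos hs) (if_pos le_rfl)
    have hright : HasDerivWithinAt (fun s => if s ≤ t then f s else g s) (f' t) (Set.Ici t) t := by
      refine hfg' ▸ (hg t).hasDerivWithinAt.congr (fun s hs => ?_) (by rw [if_pos le_rfl, hfg])
      rcases (Set.mem_Ici.1 hs).eq_or_lt with rfl | hlt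
      · rw [if_pos le_rfl, hfg]
      · rw [if_neg (not_le.2 hlt)]
    simpa [Set.Iic_union_Ici] using hleft.union hright
  · rw [if_neg (not_le.2 h)]
    refine (hg t).congr_of_eventuallyEq ?_
    filter_upwards [Ioi_mem_nhds h] with s hs using if_neg (not_le.2 hs)

end Gluing

section DomainWall

variable {E : Type*} [NormedAddCommGroup E] [NormedSpace ℝ E]

noncomputable def domainWall (qm qp : E) (t : ℝ) : E :=
  if t ≤ 0 then |Real.tanh t| • qm else |Real.tanh t| • qp

lemma hasDerivAt_domainWall_of_neg (qm qp : E) {t : ℝ} (ht : t < 0) :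
    HasDerivAt (domainWall qm qp) (-(1 - Real.tanh t ^ 2) • qm) t := by
  refine ((Real.hasDerivAt_tanh t).neg.smul_const qm).congr_of_eventuallyEq ?_
  filter_upwards [Iio_mem_nhds ht] with s hs
  rw [domainWall, if_pos hs.le, abs_of_nonpos (Real.tanh_nonpos hs.le)]; rfl

lemma hasDerivAt_domainWall_of_pos (qm qp : E) {t : ℝ} (ht : 0 < t) :
    HasDerivAt (domainWall qm qp) ((1 - Real.tanh t ^ 2) • qp) t := by
  refine ((Real.hasDerivAt_tanh t).smul_const qp).congr_of_eventuallyEq ?_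
  filter_upwards [Ioi_mem_nhds ht] with s hs
  rw [domainWall, if_neg (not_le.2 hs), abs_of_nonneg (Real.tanh_nonneg hs.le)]

lemma differentiableAt_domainWall (qm qp : E) {t : ℝ} (ht : t ≠ 0) :
    DifferentiableAt ℝ (domainWall qm qp) t := by
  rcases ht.lt_or_gt with h | h
  · exact (hasDerivAt_domainWall_of_neg qm qp h).differentiableAt
  · exact (hasDerivAt_domainWall_of_pos qm qp h).differentiableAt

lemma norm_domainWall {qm qp : E} (hqm : ‖qm‖ = 1) (hqp : ‖qp‖ = 1) (t : ℝ) :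
    ‖domainWall qm qp t‖ = |Real.tanh t| := by
  unfold domainWall; split_ifs <;> simp [norm_smul, hqm, hqp]

lemma norm_deriv_domainWall {qm qp : E} (hqm : ‖qm‖ = 1) (hqp : ‖qp‖ = 1) {t : ℝ} (ht : t ≠ 0) :
    ‖deriv (domainWall qm qp) t‖ = 1 - Real.tanh t ^ 2 := by
  have h : 0 ≤ 1 - Real.tanh t ^ 2 := by linarith [Real.tanh_sq_lt_one t]
  rcases ht.lt_or_gt with ht | ht
  · rw [(hasDerivAt_domainWall_of_neg qm qp ht).deriv, norm_smul, hqm, mul_one, norm_neg,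
      Real.norm_of_nonneg h]
  · rw [(hasDerivAt_domainWall_of_pos qm qp ht).deriv, norm_smul, hqp, mul_one,
      Real.norm_of_nonneg h]

lemma lintegral_energy_domainWall {qm qp : E} (hqm : ‖qm‖ = 1) (hqp : ‖qp‖ = 1) :
    ∫⁻ t, ENNReal.ofReal ((‖domainWall qm qp t‖ ^ 2 - 1) ^ 2 + ‖deriv (domainWall qm qp) t‖ ^ 2)
      = ENNReal.ofReal (8 / 3) := by
  rw [← Real.lintegral_two_mul_one_sub_tanh_sq_sq]
  refine lintegral_congr_ae ?_
  filter_upwards [measure_eq_zero_iff_ae_notMem.1 (measure_singleton (0 : ℝ))] with t ht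
  rw [norm_domainWall hqm hqp, norm_deriv_domainWall hqm hqp ht, sq_abs]
  ring_nf

end DomainWall

section GreatCircle

variable {E : Type*} [NormedAddCommGroup E] [InnerProductSpace ℝ E]

noncomputable def greatCircle (e f : E) (a : ℝ) : E := Real.cos a • e + Real.sin a • f

lemma hasDerivAt_greatCircle_comp (e f : E) {φ : ℝ → ℝ} {φ' t : ℝ} (hφ : HasDerivAt φ φ' t) :
    HasDerivAt (fun s => greatCircle e f (φ s)) (φ' • greatCircle e f (φ t + Real.pi / 2)) t := by
  have h := (hφ.cos.smul_const e).add (hφ.sin.smul_const f)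
  refine h.congr_deriv ?_
  simp only [greatCircle, Real.cos_add_pi_div_two, Real.sin_add_pi_div_two, smul_add, smul_smul]
  module

lemma greatCircle_zero (e f : E) : greatCircle e f 0 = e := by simp [greatCircle]

lemma norm_greatCircle {e f : E} (he : ‖e‖ = 1) (hf : ‖f‖ = 1) (hef : ⟪e, f⟫ = 0) (a : ℝ) :
    ‖greatCircle e f a‖ = 1 := by
  have hfe : ⟪f, e⟫ = 0 := by rw [real_inner_comm, hef]
  have hee : ⟪e, e⟫ = 1 := by rw [real_inner_self_eq_norm_sq, he, one_pow]
  have hff : ⟪f, f⟫ = 1 := by rw [real_inner_self_eq_norm_sq, hf, one_pow]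
  have h : ‖greatCircle e f a‖ ^ 2 = 1 := by
    rw [← real_inner_self_eq_norm_sq]
    simp only [greatCircle, inner_add_left, inner_add_right, real_inner_smul_left,
      real_inner_smul_right, hee, hff, hef, hfe]
    linear_combination Real.cos_sq_add_sin_sq a
  exact (pow_eq_one_iff_of_nonneg (norm_nonneg _) two_ne_zero).1 h

lemma inner_greatCircle_eq_zero {e f q : E} (he : ⟪e, q⟫ = 0) (hf : ⟪f, q⟫ = 0) (a : ℝ) :
    ⟪greatCircle e f a, q⟫ = 0 := by
  simp [greatCircle, inner_add_left, real_inner_smul_left, he, hf]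

end GreatCircle

lemma exists_norm_eq_one_inner_eq_zero {E : Type*} [NormedAddCommGroup E] [InnerProductSpace ℝ E]
    [FiniteDimensional ℝ E] (hE : 2 < Module.finrank ℝ E) (x y : E) :
    ∃ e : E, ‖e‖ = 1 ∧ ⟪x, e⟫ = 0 ∧ ⟪y, e⟫ = 0 := by
  set K := Submodule.span ℝ (Set.range ![x, y])
  have hK : Module.finrank ℝ K ≤ 2 := by
    simpa [Set.finrank] using finrank_range_le_card ![x, y]
  have hKperp : Kᗮ ≠ ⊥ := by
    intro h
    rw [Submodule.orthogonal_eq_bot_iff] at h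
    rw [h, finrank_top] at hK
    omega
  obtain ⟨v, hv, hv0⟩ := Submodule.exists_mem_ne_zero_of_ne_bot hKperp
  have horth : ∀ z ∈ K, ⟪z, v⟫ = 0 := (Submodule.mem_orthogonal K v).1 hv
  refine ⟨‖v‖⁻¹ • v, norm_smul_inv_norm hv0, ?_, ?_⟩
  · rw [real_inner_smul_right, horth x (Submodule.subset_span ⟨0, rfl⟩), mul_zero]
  · rw [real_inner_smul_right, horth y (Submodule.subset_span ⟨1, rfl⟩), mul_zero]

section SpinField

variable {E : Type*} [NormedAddCommGroup E] [InnerProductSpace ℝ E]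

noncomputable def spinField (e fm fp : E) (t : ℝ) : E :=
  if t ≤ 0 then greatCircle e fm (-Real.log (Real.cosh t))
  else greatCircle e fp (Real.log (Real.cosh t))

lemma hasDerivAt_spinField (e fm fp : E) (t : ℝ) :
    HasDerivAt (spinField e fm fp)
      (if t ≤ 0 then (-Real.tanh t) • greatCircle e fm (-Real.log (Real.cosh t) + Real.pi / 2)
        else Real.tanh t • greatCircle e fp (Real.log (Real.cosh t) + Real.pi / 2)) t :=
  hasDerivAt_ite_le (fun s => hasDerivAt_greatCircle_comp e fm (Real.hasDerivAt_log_cosh s).neg)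
    (fun s => hasDerivAt_greatCircle_comp e fp (Real.hasDerivAt_log_cosh s))
    (by simp [greatCircle_zero]) (by simp) t

end SpinField

lemma cross3_greatCircle (e f : ℝ³) (a c : ℝ) :
    cross3 (greatCircle e f a) (c • greatCircle e f (a + Real.pi / 2)) = c • cross3 e f := by
  rw [greatCircle, greatCircle, Real.cos_add_pi_div_two, Real.sin_add_pi_div_two, smul_add,
    smul_smul, smul_smul, cross3_smul_add_smul]
  congr 1
  linear_combination c * Real.cos_sq_add_sin_sq a

section Frame

variable {q e : ℝ³}

lemma norm_greatCircle_cross3 (hq : ‖q‖ = 1) (he : ‖e‖ = 1) (hqe : ⟪q, e⟫ = 0) (a : ℝ) :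
    ‖greatCircle e (cross3 q e) a‖ = 1 := by
  refine norm_greatCircle he ?_ (by rw [real_inner_comm, inner_cross3_right]) a
  have h := inner_cross3_cross3 q e q e
  rw [real_inner_self_eq_norm_sq, real_inner_self_eq_norm_sq, real_inner_self_eq_norm_sq, hq, he,
    hqe] at h
  exact (pow_eq_one_iff_of_nonneg (norm_nonneg _) two_ne_zero).1 (by linarith)

lemma inner_greatCircle_cross3 (hqe : ⟪q, e⟫ = 0) (a : ℝ) :
    ⟪greatCircle e (cross3 q e) a, q⟫ = 0 :=
  inner_greatCircle_eq_zero (by rw [real_inner_comm, hqe]) (inner_cross3_left q e) a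

lemma cross3_greatCircle_cross3 (he : ‖e‖ = 1) (hqe : ⟪q, e⟫ = 0) (a c : ℝ) :
    cross3 (greatCircle e (cross3 q e) a) (c • greatCircle e (cross3 q e) (a + Real.pi / 2))
      = c • q := by
  rw [cross3_greatCircle, cross3_cross3, real_inner_self_eq_norm_sq, he, real_inner_comm, hqe]
  simp

end Frame

theorem stmt3_general (qm qp : EuclideanSpace ℝ (Fin 3)) (hqm : ‖qm‖ = 1) (hqp : ‖qp‖ = 1)
    (w : ℝ → EuclideanSpace ℝ (Fin 3))
    (hw : ∀ t : ℝ, w t = if t ≤ 0 then |Real.tanh t| • qm else |Real.tanh t| • qp) :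
    ((∀ t : ℝ, t ≠ 0 → DifferentiableAt ℝ w t) ∧
      (∫⁻ t : ℝ, ENNReal.ofReal ((‖w t‖ ^ 2 - 1) ^ 2 + ‖deriv w t‖ ^ 2))
        = ENNReal.ofReal (8 / 3)) ∧
    ∃ u : ℝ → EuclideanSpace ℝ (Fin 3),
      (∀ t : ℝ, DifferentiableAt ℝ u t) ∧ (∀ t : ℝ, ‖u t‖ = 1) ∧
      (∀ t : ℝ, ⟪u t, qm⟫ = 0 ∨ ⟪u t, qp⟫ = 0) ∧
      (∀ t : ℝ, cross3 (u t) (deriv u t) = w t) := by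
  obtain rfl : w = domainWall qm qp := funext hw
  refine ⟨⟨fun t => differentiableAt_domainWall qm qp, lintegral_energy_domainWall hqm hqp⟩, ?_⟩
  obtain ⟨e, he, hqme, hqpe⟩ :=
    exists_norm_eq_one_inner_eq_zero (by simp : 2 < Module.finrank ℝ ℝ³) qm qp
  refine ⟨spinField e (cross3 qm e) (cross3 qp e),
    fun t => (hasDerivAt_spinField _ _ _ t).differentiableAt, fun t => ?_, fun t => ?_, fun t => ?_⟩
  · unfold spinField
    split_ifs
    · exact norm_greatCircle_cross3 hqm he hqme _
    · exact norm_greatCircle_cross3 hqp he hqpe _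
  · unfold spinField
    split_ifs
    · exact .inl (inner_greatCircle_cross3 hqme _)
    · exact .inr (inner_greatCircle_cross3 hqpe _)
  · rw [(hasDerivAt_spinField _ _ _ t).deriv, spinField, domainWall]
    split_ifs with ht
    · rw [cross3_greatCircle_cross3 he hqme, abs_of_nonpos (Real.tanh_nonpos ht)]
    · rw [cross3_greatCircle_cross3 he hqpe, abs_of_nonneg (Real.tanh_nonneg (not_le.1 ht).le)]

/-- for distinct `q₋, q₊ ∈ S²`, the profile `w(t) = |tanh t|·q₋` for `t ≤ 0`,
`w(t) = |tanh t|·q₊` for `t > 0`, is differentiable away from `0`, has energy exactly `8/3`,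
and is the chirality `u × u'` of a differentiable spin field `u` with values in
`(S² ∩ q₋^⊥) ∪ (S² ∩ q₊^⊥)`. -/
theorem stmt3 (qm qp : EuclideanSpace ℝ (Fin 3)) (hqm : ‖qm‖ = 1) (hqp : ‖qp‖ = 1)
    (hne : qm ≠ qp)
    (w : ℝ → EuclideanSpace ℝ (Fin 3))
    (hw : ∀ t : ℝ, w t = if t ≤ 0 then |Real.tanh t| • qm else |Real.tanh t| • qp) :
    ((∀ t : ℝ, t ≠ 0 → DifferentiableAt ℝ w t) ∧
      (∫⁻ t : ℝ, ENNReal.ofReal ((‖w t‖ ^ 2 - 1) ^ 2 + ‖deriv w t‖ ^ 2))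
        = ENNReal.ofReal (8 / 3)) ∧
    ∃ u : ℝ → EuclideanSpace ℝ (Fin 3),
      (∀ t : ℝ, DifferentiableAt ℝ u t) ∧ (∀ t : ℝ, ‖u t‖ = 1) ∧
      (∀ t : ℝ, ⟪u t, qm⟫ = 0 ∨ ⟪u t, qp⟫ = 0) ∧
      (∀ t : ℝ, cross3 (u t) (deriv u t) = w t) :=
  stmt3_general qm qp hqm hqp w hw
end

section
/- Let C > 0, let (δ_n) ⊂ (0,1) with δ_n → 0, let (N_n) ⊂ ℕ with N_n ≥ 2 and N_n·√δ_n → +∞, and for each n let u_n : {0,…,N_n} → S² satisfy the periodic boundary condition and the scaled energy bound H_{δ_n}(u_n) ≤ √2·C·δ_n^{3/2}. Define z_n^i := (u_n^i × u_n^{i+1})/√(2δ_n). Then there exist M > 0 and n₀ ∈ ℕ such that ‖z_n^i‖ ≤ M for all n ≥ n₀ and all 0 ≤ i ≤ N_n − 1 (equiboundedness of the chirality order parameter). -/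
/-!
Write `s_i = ‖u^i × u^{i+1}‖` and `p_i = ⟪u^i, u^{i+1}⟫`. Splitting `u^{i+2} - 2(1-δ) u^{i+1} + u^i`
along the unit vector `u^{i+1}` bounds the `i`-th energy term from below by
`(2(1-δ) - p_i - p_{i+1})² + (s_{i+1} - s_i)²`, and `s_i² ≤ 2 (1 - p_i)` on the sphere.
Rescaling `z_i = s_i / √(2δ)` turns the energy bound into a discrete Modica–Mortola bound
`∑ ε m_i² + ε⁻¹ (z_{i+1} - z_i)² ≤ 2C` with `ε = √(2δ) / 2` and `m_i ≥ z_i² + z_{i+1}² - 2`.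
As `N √δ → ∞`, the chain is too long for every `z_j` to exceed `√2`. By AM–GM,
`2 |m_i| |z_{i+1} - z_i|` is dominated by the energy, so the total variation of `((z - 2)⁺)²`
along the chain is at most `C`; starting from an index with `z_j ≤ √2` this gives
`z_i ≤ 2 + √C` everywhere.
-/

open MeasureTheory Filter
open scoped RealInnerProductSpace

open Finset

section InnerProductSpace

variable {F : Type*} [NormedAddCommGroup F] [InnerProductSpace ℝ F]

lemma norm_sub_inner_smul_sq {a b : F} (hb : ‖b‖ = 1) :
    ‖a - ⟪a, b⟫ • b‖ ^ 2 = ‖a‖ ^ 2 - ⟪a, b⟫ ^ 2 := by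
  rw [norm_sub_sq_real, inner_smul_right, norm_smul, hb, mul_one, Real.norm_eq_abs, sq_abs]
  ring

/-- Split `c - μ • b + a` into its component along `b` and a component orthogonal to `b`,
whose norm is at least `|‖c - ⟪c, b⟫ • b‖ - ‖a - ⟪a, b⟫ • b‖|`. -/
lemma sq_add_sq_sub_norm_sub_inner_smul_le {a b c : F} (hb : ‖b‖ = 1) (μ : ℝ) :
    (μ - ⟪a, b⟫ - ⟪c, b⟫) ^ 2 + (‖c - ⟪c, b⟫ • b‖ - ‖a - ⟪a, b⟫ • b‖) ^ 2
      ≤ ‖c - μ • b + a‖ ^ 2 := by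
  set x := c - ⟪c, b⟫ • b
  set y := a - ⟪a, b⟫ • b
  have hbb : ⟪b, b⟫ = 1 := by rw [real_inner_self_eq_norm_sq, hb, one_pow]
  have horth : ⟪b, x + y⟫ = 0 := by
    simp only [x, y, inner_add_right, inner_sub_right, inner_smul_right, real_inner_comm b, hbb]
    ring
  have hsplit : c - μ • b + a = -((μ - ⟪a, b⟫ - ⟪c, b⟫) • b) + (x + y) := by
    simp only [x, y]; module
  rw [hsplit, norm_add_sq_real, inner_neg_left, real_inner_smul_left, horth, norm_neg, norm_smul,
    hb, Real.norm_eq_abs, norm_add_sq_real]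
  nlinarith [abs_le.1 (abs_real_inner_le_norm x y), sq_abs (μ - ⟪a, b⟫ - ⟪c, b⟫)]

end InnerProductSpace

section CrossProduct

open Matrix in
lemma norm_cross3_sq (a b : EuclideanSpace ℝ (Fin 3)) :
    ‖cross3 a b‖ ^ 2 = ‖a‖ ^ 2 * ‖b‖ ^ 2 - ⟪a, b⟫ ^ 2 := by
  simp_rw [cross3, norm_sq_eq_re_inner (𝕜 := ℝ), EuclideanSpace.inner_eq_star_dotProduct,
    star_trivial, RCLike.re_to_real]
  simp [cross_dot_cross, dotProduct_comm (WithLp.ofLp b) (WithLp.ofLp a), sq]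

lemma norm_cross3_comm (a b : EuclideanSpace ℝ (Fin 3)) : ‖cross3 a b‖ = ‖cross3 b a‖ := by
  rw [← sq_eq_sq₀ (norm_nonneg _) (norm_nonneg _), norm_cross3_sq, norm_cross3_sq,
    real_inner_comm]
  ring

variable {a b c : EuclideanSpace ℝ (Fin 3)}

lemma norm_cross3_eq_norm_sub_inner_smul (hb : ‖b‖ = 1) :
    ‖cross3 a b‖ = ‖a - ⟪a, b⟫ • b‖ := by
  rw [← sq_eq_sq₀ (norm_nonneg _) (norm_nonneg _), norm_cross3_sq, norm_sub_inner_smul_sq hb,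
    hb, one_pow, mul_one]

lemma norm_cross3_sq_le (ha : ‖a‖ = 1) (hb : ‖b‖ = 1) :
    ‖cross3 a b‖ ^ 2 ≤ 2 * (1 - ⟪a, b⟫) := by
  rw [norm_cross3_sq, ha, hb]
  nlinarith [sq_nonneg (1 - ⟪a, b⟫)]

lemma sq_add_sq_sub_norm_cross3_le (hb : ‖b‖ = 1) (μ : ℝ) :
    (μ - ⟪a, b⟫ - ⟪b, c⟫) ^ 2 + (‖cross3 b c‖ - ‖cross3 a b‖) ^ 2
      ≤ ‖c - μ • b + a‖ ^ 2 := by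
  rw [norm_cross3_comm b c, norm_cross3_eq_norm_sub_inner_smul hb,
    norm_cross3_eq_norm_sub_inner_smul hb, real_inner_comm c b]
  exact sq_add_sq_sub_norm_sub_inner_smul_le hb μ

end CrossProduct

lemma dist_le_range_sum_dist_of_le {α : Type*} [PseudoMetricSpace α] (f : ℕ → α) {j k K : ℕ}
    (hj : j ≤ K) (hk : k ≤ K) :
    dist (f j) (f k) ≤ ∑ i ∈ range K, dist (f i) (f (i + 1)) := by
  wlog hjk : j ≤ k generalizing j k
  · rw [dist_comm]
    exact this hk hj (le_of_not_ge hjk)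
  calc dist (f j) (f k) ≤ ∑ i ∈ Ico j k, dist (f i) (f (i + 1)) := dist_le_Ico_sum_dist f hjk
    _ ≤ ∑ i ∈ range K, dist (f i) (f (i + 1)) :=
      sum_le_sum_of_subset_of_nonneg (fun i hi => by simp only [mem_Ico, mem_range] at hi ⊢; omega)
        fun _ _ _ => dist_nonneg

/-- The potential `x ↦ ((x - 2)⁺)²` has slope `2 (x - 2)⁺ ≤ (x² - 2)⁺`. -/
lemma abs_sq_posPart_sub_two_sub_le {x y m : ℝ} (h : x ^ 2 + y ^ 2 - 2 ≤ m) :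
    |((x - 2)⁺) ^ 2 - ((y - 2)⁺) ^ 2| ≤ |m| * |x - y| := by
  wlog hyx : y ≤ x generalizing x y
  · rw [abs_sub_comm, abs_sub_comm x]
    exact this (by linarith) (le_of_not_ge hyx)
  rcases le_total x 2 with hx | hx
  · rw [posPart_eq_zero.2 (by linarith), posPart_eq_zero.2 (by linarith), sub_self, abs_zero]
    positivity
  have hm : 0 ≤ m := by nlinarith
  rw [posPart_eq_self.2 (by linarith), abs_of_nonneg hm, abs_of_nonneg (by linarith : 0 ≤ x - y)]
  rcases le_total y 2 with hy | hy
  · rw [posPart_eq_zero.2 (by linarith), zero_pow two_ne_zero, sub_zero, abs_sq]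
    nlinarith
  · rw [posPart_eq_self.2 (by linarith), abs_of_nonneg (by nlinarith)]
    nlinarith

theorem le_two_add_sqrt_of_sum_le {ε C : ℝ} {K : ℕ} {z m : ℕ → ℝ} (hε : 0 < ε)
    (hm : ∀ i < K, z i ^ 2 + z (i + 1) ^ 2 - 2 ≤ m i) (hK : C < 2 * K * ε)
    (hE : ∑ i ∈ range K, (ε * m i ^ 2 + ε⁻¹ * (z (i + 1) - z i) ^ 2) ≤ 2 * C) :
    ∀ i ≤ K, z i ≤ 2 + √C := by
  set P : ℝ → ℝ := fun x => ((x - 2)⁺) ^ 2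
  have hamgm : ∀ i, 2 * (|m i| * |z (i + 1) - z i|)
      ≤ ε * m i ^ 2 + ε⁻¹ * (z (i + 1) - z i) ^ 2 := by
    intro i
    have hsq : ε * m i ^ 2 + ε⁻¹ * (z (i + 1) - z i) ^ 2 - 2 * (|m i| * |z (i + 1) - z i|)
        = ε⁻¹ * (ε * |m i| - |z (i + 1) - z i|) ^ 2 := by
      rw [← sq_abs (m i), ← sq_abs (z (i + 1) - z i)]
      field_simp
      ring
    nlinarith [mul_nonneg (inv_pos.2 hε).le (sq_nonneg (ε * |m i| - |z (i + 1) - z i|))]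
  obtain ⟨j, hjK, hj⟩ : ∃ j ≤ K, z j ^ 2 ≤ 2 := by
    by_contra! h
    have hsum : ∑ _i ∈ range K, 4 * ε
        ≤ ∑ i ∈ range K, (ε * m i ^ 2 + ε⁻¹ * (z (i + 1) - z i) ^ 2) := by
      refine sum_le_sum fun i hi => ?_
      have hi := mem_range.1 hi
      have h2 : 2 ≤ m i := by linarith [hm i hi, h i hi.le, h (i + 1) hi]
      have h4 : 4 ≤ m i ^ 2 := by nlinarith
      nlinarith [mul_nonneg (inv_pos.2 hε).le (sq_nonneg (z (i + 1) - z i))]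
    rw [sum_const, card_range, nsmul_eq_mul] at hsum
    linarith
  have hvar : ∑ i ∈ range K, dist (P (z i)) (P (z (i + 1))) ≤ C := by
    have := sum_le_sum fun i (_ : i ∈ range K) => hamgm i
    rw [← mul_sum] at this
    refine (sum_le_sum fun i hi => ?_).trans (by linarith)
    rw [Real.dist_eq, abs_sub_comm]
    exact abs_sq_posPart_sub_two_sub_le (by linarith [hm i (mem_range.1 hi)])
  intro i hi
  have hPj : P (z j) = 0 := by
    have : z j ≤ 2 := by nlinarith
    simp [P, posPart_eq_zero.2 (by linarith : z j - 2 ≤ 0)]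
  have hPi : ((z i - 2)⁺) ^ 2 ≤ C := by
    have := dist_le_range_sum_dist_of_le (P ∘ z) hjK hi
    simp only [Function.comp, hPj, Real.dist_eq, zero_sub, abs_neg] at this
    exact (le_abs_self _).trans (this.trans hvar)
  have := Real.le_sqrt_of_sq_le hPi
  linarith [le_posPart (z i - 2)]

theorem le_sqrt_two_mul_mul_of_sum_le {d C : ℝ} {K : ℕ} {s X : ℕ → ℝ} (hd : 0 < d)
    (hX : ∀ i < K, (s i ^ 2 + s (i + 1) ^ 2) / 2 - 2 * d ≤ X i) (hK : C < K * √(2 * d))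
    (hE : ∑ i ∈ range K, (X i ^ 2 + (s (i + 1) - s i) ^ 2) ≤ 2 * d * √(2 * d) * C) :
    ∀ i ≤ K, s i ≤ √(2 * d) * (2 + √C) := by
  set w := √(2 * d)
  have hw : 0 < w := Real.sqrt_pos.2 (by linarith)
  have hw2 : w ^ 2 = 2 * d := Real.sq_sqrt (by linarith)
  have hrescale : ∀ i, w / 2 * (X i / d) ^ 2 + (w / 2)⁻¹ * (s (i + 1) / w - s i / w) ^ 2
      = (X i ^ 2 + (s (i + 1) - s i) ^ 2) / (d * w) := by
    intro i
    field_simp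
    rw [show w ^ 4 = (w ^ 2) ^ 2 by ring, hw2]
    ring
  intro i hi
  rw [← div_le_iff₀' hw]
  refine le_two_add_sqrt_of_sum_le (K := K) (z := fun i => s i / w) (m := fun i => X i / d)
    (half_pos hw) (fun i hi => ?_) (by linarith) ?_ i hi
  · rw [div_pow, div_pow, hw2, le_div_iff₀ hd]
    have := hX i hi
    field_simp
    linarith
  · simp_rw [hrescale, ← sum_div]
    rw [div_le_iff₀ (by positivity)]
    linarith

lemma tendsto_natCast_pred_mul_sqrt_two_mul {δ : ℕ → ℝ} {N : ℕ → ℕ} (hδ : ∀ n, δ n ≤ 1)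
    (hNδ : Tendsto (fun n => (N n : ℝ) * √(δ n)) atTop atTop) :
    Tendsto (fun n => ((N n - 1 : ℕ) : ℝ) * √(2 * δ n)) atTop atTop := by
  refine tendsto_atTop_mono (fun n => ?_)
    (tendsto_atTop_add_const_right _ (-√2) (hNδ.const_mul_atTop (Real.sqrt_pos.2 two_pos)))
  have hN : (N n : ℝ) - 1 ≤ ((N n - 1 : ℕ) : ℝ) := by
    rw [sub_le_iff_le_add]; exact_mod_cast (by omega : N n ≤ N n - 1 + 1)
  have hδ1 : √(δ n) ≤ 1 := Real.sqrt_le_one.2 (hδ n)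
  rw [Real.sqrt_mul zero_le_two]
  nlinarith [mul_le_mul_of_nonneg_right hN
    (mul_nonneg (Real.sqrt_nonneg 2) (Real.sqrt_nonneg (δ n))), Real.sqrt_nonneg 2]

theorem stmt8_general (C : ℝ)
    (δ : ℕ → ℝ) (hδ : ∀ n, δ n ∈ Set.Ioo (0 : ℝ) 1)
    (Nn : ℕ → ℕ)
    (hNδ : Tendsto (fun n => (Nn n : ℝ) * Real.sqrt (δ n)) atTop atTop)
    (u : ℕ → ℕ → EuclideanSpace ℝ (Fin 3)) (hu : ∀ n, ∀ i ≤ Nn n, ‖u n i‖ = 1)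
    (hE : ∀ n, (1 / 2 : ℝ) * ∑ i ∈ Finset.range (Nn n - 1),
        ‖u n (i + 2) - (2 * (1 - δ n)) • u n (i + 1) + u n i‖ ^ 2
      ≤ Real.sqrt 2 * C * δ n ^ ((3 : ℝ) / 2)) :
    ∃ M : ℝ, 0 < M ∧ ∃ n₀ : ℕ, ∀ n ≥ n₀, ∀ i ≤ Nn n - 1,
      ‖(Real.sqrt (2 * δ n))⁻¹ • cross3 (u n i) (u n (i + 1))‖ ≤ M := by
  obtain ⟨n₀, hn₀⟩ := eventually_atTop.1 ((tendsto_natCast_pred_mul_sqrt_two_mul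
    (fun n => (hδ n).2.le) hNδ).eventually_gt_atTop C)
  refine ⟨2 + √C, by positivity, n₀, fun n hn i hi => ?_⟩
  have hδ0 := (hδ n).1
  have hbound := le_sqrt_two_mul_mul_of_sum_le (s := fun i => ‖cross3 (u n i) (u n (i + 1))‖)
    (X := fun i => 2 * (1 - δ n) - ⟪u n i, u n (i + 1)⟫ - ⟪u n (i + 1), u n (i + 2)⟫)
    hδ0 (fun i hi => ?_) (hn₀ n hn) ?_ i hi
  · rw [norm_smul, norm_inv, Real.norm_of_nonneg (Real.sqrt_nonneg _),
      inv_mul_le_iff₀ (Real.sqrt_pos.2 (by linarith))]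
    exact hbound
  · linarith [norm_cross3_sq_le (hu n i (by omega)) (hu n (i + 1) (by omega)),
      norm_cross3_sq_le (hu n (i + 1) (by omega)) (hu n (i + 2) (by omega))]
  · refine (sum_le_sum fun i hi => sq_add_sq_sub_norm_cross3_le
      (hu n (i + 1) (by have := mem_range.1 hi; omega)) _).trans ?_
    have h32 : δ n ^ ((3 : ℝ) / 2) = δ n * √(δ n) := by
      rw [show (3 : ℝ) / 2 = 1 + 1 / 2 by norm_num, Real.rpow_add hδ0, Real.rpow_one,
        Real.sqrt_eq_rpow]
    have hEn := hE n
    rw [h32] at hEn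
    rw [Real.sqrt_mul zero_le_two]
    linarith

/-- equiboundedness of the chirality order parameter
`z_n^i = (u_n^i × u_n^{i+1})/√(2δ_n)` for sequences whose renormalized chain energy satisfies
the scaled bound `H_{δ_n}(u_n) ≤ √2 C δ_n^{3/2}`, with `δ_n → 0` and `N_n √δ_n → ∞`. -/
theorem stmt8 (C : ℝ) (hC : 0 < C)
    (δ : ℕ → ℝ) (hδ : ∀ n, δ n ∈ Set.Ioo (0 : ℝ) 1) (hδ0 : Tendsto δ atTop (nhds 0))
    (Nn : ℕ → ℕ) (hN : ∀ n, 2 ≤ Nn n)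
    (hNδ : Tendsto (fun n => (Nn n : ℝ) * Real.sqrt (δ n)) atTop atTop)
    (u : ℕ → ℕ → EuclideanSpace ℝ (Fin 3)) (hu : ∀ n, ∀ i ≤ Nn n, ‖u n i‖ = 1)
    (hper : ∀ n, ⟪u n 1, u n 0⟫ = ⟪u n (Nn n), u n (Nn n - 1)⟫)
    (hE : ∀ n, (1 / 2 : ℝ) * ∑ i ∈ Finset.range (Nn n - 1),
        ‖u n (i + 2) - (2 * (1 - δ n)) • u n (i + 1) + u n i‖ ^ 2
      ≤ Real.sqrt 2 * C * δ n ^ ((3 : ℝ) / 2)) :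
    ∃ M : ℝ, 0 < M ∧ ∃ n₀ : ℕ, ∀ n ≥ n₀, ∀ i ≤ Nn n - 1,
      ‖(Real.sqrt (2 * δ n))⁻¹ • cross3 (u n i) (u n (i + 1))‖ ≤ M :=
  stmt8_general C δ hδ Nn hNδ u hu hE
end
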